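/- arXiv:2209.01790 — 8 statements merged into one kernel-verified Lean document; each statement's English description precedes it below -/
import Mathlib

section
/- Let a > 1, let b ∈ (1/a, 1), let C > 0, let X ⊆ ℝ be an interval, and let K : ℝ → ℝ be differentiable on X with K(x) > 0 and K'(x) < 0 for all x ∈ X. Define u(x,t) = -(C * t^a + K(x))^b. Then for every x in the interior of X and every t > 0, the mixed partial derivative ∂²u/∂t∂x (x,t) (the derivative in t of t ↦ ∂u/∂x (x,t)) is strictly negative; consequently u satisfies strict Stochastic Impatience on X × (0,∞): for all x₁ > x₂ in X and 0 < t₁ < t₂, u(x₁,t₁) + u(x₂,t₂) > u(x₁,t₂) + u(x₂,t₁). -/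
theorem stmt_3 (a b C : ℝ) (ha : 1 < a) (hb : b ∈ Set.Ioo (1 / a) 1) (hC : 0 < C)
    (X : Set ℝ) (hX : Convex ℝ X)
    (K K' : ℝ → ℝ) (hK : ∀ x ∈ X, HasDerivAt K (K' x) x)
    (hKpos : ∀ x ∈ X, 0 < K x) (hK' : ∀ x ∈ X, K' x < 0)
    (u : ℝ → ℝ → ℝ) (hu : ∀ x t : ℝ, u x t = -(C * t ^ a + K x) ^ b) :
    (∀ x ∈ interior X, ∀ t : ℝ, 0 < t →
        deriv (fun s => deriv (fun y => u y s) x) t < 0) ∧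
      (∀ x₁ ∈ X, ∀ x₂ ∈ X, x₂ < x₁ → ∀ t₁ t₂ : ℝ, 0 < t₁ → t₁ < t₂ →
        u x₁ t₁ + u x₂ t₂ > u x₁ t₂ + u x₂ t₁) := by
  have ha0 : 0 < a := lt_trans one_pos ha
  have hb0 : 0 < b := lt_trans (by positivity) hb.1
  have hb1 : b - 1 < 0 := by linarith [hb.2]
  constructor
  · intro x hx t ht
    have hxX : x ∈ X := interior_subset hx
    have hKx := hK x hxX
    have hKxpos := hKpos x hxX
    have hK'x := hK' x hxX
    -- eventual formula for the inner derivative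
    have hev : (fun s => deriv (fun y => u y s) x) =ᶠ[nhds t]
        fun s => -(K' x * b * (C * s ^ a + K x) ^ (b - 1)) := by
      filter_upwards [eventually_gt_nhds ht] with s hs
      have hfun : (fun y => u y s) = fun y => -(C * s ^ a + K y) ^ b :=
        funext fun y => hu y s
      have hpos : 0 < C * s ^ a + K x := by
        have := Real.rpow_pos_of_pos hs a
        positivity
      have hd : HasDerivAt (fun y => -(C * s ^ a + K y) ^ b)
          (-(K' x * b * (C * s ^ a + K x) ^ (b - 1))) x :=
        ((hKx.const_add (C * s ^ a)).rpow_const (Or.inl hpos.ne')).neg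
      rw [hfun, hd.deriv]
    rw [hev.deriv_eq]
    have hPpos : 0 < C * t ^ a + K x := by
      have := Real.rpow_pos_of_pos ht a
      positivity
    have h1 : HasDerivAt (fun s : ℝ => s ^ a) (a * t ^ (a - 1)) t :=
      Real.hasDerivAt_rpow_const (Or.inl ht.ne')
    have h2 : HasDerivAt (fun s => C * s ^ a + K x) (C * (a * t ^ (a - 1))) t :=
      (h1.const_mul C).add_const (K x)
    have h3 : HasDerivAt (fun s => (C * s ^ a + K x) ^ (b - 1))
        (C * (a * t ^ (a - 1)) * (b - 1) * (C * t ^ a + K x) ^ (b - 1 - 1)) t :=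
      h2.rpow_const (Or.inl hPpos.ne')
    have h4 : HasDerivAt (fun s => -(K' x * b * (C * s ^ a + K x) ^ (b - 1)))
        (-(K' x * b * (C * (a * t ^ (a - 1)) * (b - 1) * (C * t ^ a + K x) ^ (b - 1 - 1)))) t :=
      (h3.const_mul (K' x * b)).neg
    rw [h4.deriv]
    have hQ : 0 < (C * t ^ a + K x) ^ (b - 1 - 1) := Real.rpow_pos_of_pos hPpos _
    have hT : 0 < t ^ (a - 1) := Real.rpow_pos_of_pos ht _
    have hneg : (b - 1) * (C * t ^ a + K x) ^ (b - 1 - 1) * (C * (a * t ^ (a - 1))) < 0 :=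
      mul_neg_of_neg_of_pos (mul_neg_of_neg_of_pos hb1 hQ) (by positivity)
    have hneg2 : C * (a * t ^ (a - 1)) * (b - 1) * (C * t ^ a + K x) ^ (b - 1 - 1) < 0 :=
      mul_neg_of_neg_of_pos (mul_neg_of_pos_of_neg (by positivity) hb1) hQ
    have : 0 < K' x * b * (C * (a * t ^ (a - 1)) * (b - 1) * (C * t ^ a + K x) ^ (b - 1 - 1)) :=
      mul_pos_of_neg_of_neg (mul_neg_of_neg_of_pos hK'x hb0) hneg2
    linarith
  · intro x₁ hx₁ x₂ hx₂ hxlt t₁ t₂ ht₁ ht₁₂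
    -- K is strictly decreasing on X
    have hanti : StrictAntiOn K X := by
      apply strictAntiOn_of_deriv_neg hX
      · exact fun y hy => (hK y hy).continuousAt.continuousWithinAt
      · intro y hy
        rw [(hK y (interior_subset hy)).deriv]
        exact hK' y (interior_subset hy)
    have hKlt : K x₁ < K x₂ := hanti hx₂ hx₁ hxlt
    set K₁ := K x₁ with hK₁
    set K₂ := K x₂ with hK₂
    have hK₁pos : 0 < K₁ := hKpos x₁ hx₁
    have hK₂pos : 0 < K₂ := hKpos x₂ hx₂
    set A₁ := C * t₁ ^ a with hA₁
    set A₂ := C * t₂ ^ a with hA₂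
    have hA₁pos : 0 < A₁ := by
      have := Real.rpow_pos_of_pos ht₁ a; positivity
    have hAlt : A₁ < A₂ := by
      have : t₁ ^ a < t₂ ^ a := Real.rpow_lt_rpow ht₁.le ht₁₂ ha0
      exact (mul_lt_mul_iff_right₀ hC).mpr this
    -- the key monotonicity: φ(A) = (A+K₁)^b - (A+K₂)^b is strictly increasing on [A₁, A₂]
    have hmono : StrictMonoOn (fun A => (A + K₁) ^ b - (A + K₂) ^ b) (Set.Icc A₁ A₂) := by
      have hderiv : ∀ p ∈ Set.Icc A₁ A₂, HasDerivAt (fun A => (A + K₁) ^ b - (A + K₂) ^ b)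
          (1 * b * (p + K₁) ^ (b - 1) - 1 * b * (p + K₂) ^ (b - 1)) p := by
        intro p hp
        have hp1 : 0 < p + K₁ := by have := hp.1; linarith
        have hp2 : 0 < p + K₂ := by have := hp.1; linarith
        exact (((hasDerivAt_id p).add_const K₁).rpow_const (Or.inl hp1.ne')).sub
          (((hasDerivAt_id p).add_const K₂).rpow_const (Or.inl hp2.ne'))
      apply strictMonoOn_of_deriv_pos (convex_Icc A₁ A₂)
      · exact fun p hp => (hderiv p hp).continuousAt.continuousWithinAt
      · intro p hp
        rw [interior_Icc] at hp
        have hpIcc : p ∈ Set.Icc A₁ A₂ := ⟨hp.1.le, hp.2.le⟩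
        rw [(hderiv p hpIcc).deriv]
        have hp1 : 0 < p + K₁ := by have := hpIcc.1; linarith
        have hp2 : p + K₁ < p + K₂ := by linarith
        have := Real.rpow_lt_rpow_of_neg hp1 hp2 hb1
        nlinarith [Real.rpow_pos_of_pos hp1 (b - 1)]
    have hkey : (A₁ + K₁) ^ b - (A₁ + K₂) ^ b < (A₂ + K₁) ^ b - (A₂ + K₂) ^ b :=
      hmono (Set.left_mem_Icc.mpr hAlt.le) (Set.right_mem_Icc.mpr hAlt.le) hAlt
    rw [hu x₁ t₁, hu x₂ t₂, hu x₁ t₂, hu x₂ t₁]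
    simp only [← hA₁, ← hA₂, ← hK₁, ← hK₂]
    linarith
end

section
/- Let a > 1, let b ∈ (1/a, 1), let C > 0, and let K > 0. Then the function f : ℝ → ℝ defined by f(t) = -(C * t^a + K)^b is strictly concave on the interval (0, ∞). -/
/-!
Up to the positive factor `a * b * C`, the derivative of `t ↦ (C * t ^ a + K) ^ b` on `(0, ∞)` is
`t ^ (a * b - 1) * (C + K * t ^ (-a)) ^ (b - 1)`. The first factor is positive and strictly
increasing because `a * b > 1`; the second is positive and nondecreasing, since
`C + K * t ^ (-a)` decreases and `b - 1 ≤ 0`. So the derivative is strictly increasing, the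
function is strictly convex, and its negative is strictly concave.
-/

open Real Set

theorem StrictMonoOn.mul_monotoneOn {α M₀ : Type*} [Preorder α] [MulZeroClass M₀]
    [PartialOrder M₀] [PosMulMono M₀] [MulPosStrictMono M₀] {f g : α → M₀} {s : Set α}
    (hf : StrictMonoOn f s) (hg : MonotoneOn g s) (hf₀ : ∀ x ∈ s, 0 ≤ f x)
    (hg₀ : ∀ x ∈ s, 0 < g x) :
    StrictMonoOn (fun x ↦ f x * g x) s := fun _ hx _ hy h ↦
  mul_lt_mul (hf hx hy h) (hg hx hy h.le) (hg₀ _ hx) (hf₀ _ hy)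

section PowerOfAffinePower

variable {a b C K : ℝ}

theorem hasDerivAt_mul_rpow_add_const_rpow (hC : 0 < C) (hK : 0 ≤ K) {t : ℝ} (ht : 0 < t) :
    HasDerivAt (fun t : ℝ ↦ (C * t ^ a + K) ^ b)
      (a * b * C * (t ^ (a * b - 1) * (C + K * t ^ (-a)) ^ (b - 1))) t := by
  have hta : 0 < t ^ a := rpow_pos_of_pos ht a
  have hbase : 0 < C * t ^ a + K := by positivity
  have hfactor : C * t ^ a + K = t ^ a * (C + K * t ^ (-a)) := by
    rw [rpow_neg ht.le]
    field_simp
  have hchain := (hasDerivAt_rpow_const (p := b) (Or.inl hbase.ne')).comp t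
    (((hasDerivAt_rpow_const (p := a) (Or.inl ht.ne')).const_mul C).add_const K)
  refine hchain.congr_deriv ?_
  have hpow : (t ^ a) ^ (b - 1) * t ^ (a - 1) = t ^ (a * b - 1) := by
    rw [← rpow_mul ht.le, ← rpow_add ht]
    ring_nf
  rw [hfactor, mul_rpow hta.le (by positivity), ← hpow]
  ring

theorem strictMonoOn_rpow_mul_const_add_mul_rpow_neg_rpow (ha : 0 ≤ a) (hb : b ≤ 1)
    (hab : 1 < a * b) (hC : 0 < C) (hK : 0 ≤ K) :
    StrictMonoOn (fun t : ℝ ↦ t ^ (a * b - 1) * (C + K * t ^ (-a)) ^ (b - 1)) (Ioi 0) := by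
  have hbase : ∀ t ∈ Ioi (0 : ℝ), 0 < C + K * t ^ (-a) := fun t ht ↦ by
    have : 0 < t ^ (-a) := rpow_pos_of_pos ht _
    positivity
  refine StrictMonoOn.mul_monotoneOn ?_ ?_ (fun t ht ↦ (rpow_pos_of_pos ht _).le)
    (fun t ht ↦ rpow_pos_of_pos (hbase t ht) _)
  · exact (strictMonoOn_rpow_Ici_of_exponent_pos (by linarith)).mono Ioi_subset_Ici_self
  · intro s hs t ht hst
    have hpow : t ^ (-a) ≤ s ^ (-a) :=
      antitoneOn_rpow_Ioi_of_exponent_nonpos (neg_nonpos.2 ha) hs ht hst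
    have hanti : C + K * t ^ (-a) ≤ C + K * s ^ (-a) := by nlinarith
    exact rpow_le_rpow_of_nonpos (hbase t ht) hanti (by linarith)

theorem strictConvexOn_mul_rpow_add_const_rpow (hb₀ : 0 < b) (hb₁ : b ≤ 1) (hab : 1 < a * b)
    (hC : 0 < C) (hK : 0 ≤ K) :
    StrictConvexOn ℝ (Ioi 0) (fun t : ℝ ↦ (C * t ^ a + K) ^ b) := by
  have ha : 0 < a := (pos_iff_pos_of_mul_pos (by linarith : 0 < a * b)).2 hb₀
  have hderiv := fun t (ht : t ∈ Ioi (0 : ℝ)) ↦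
    hasDerivAt_mul_rpow_add_const_rpow (a := a) (b := b) hC hK ht
  refine StrictMonoOn.strictConvexOn_of_deriv (convex_Ioi 0)
    (fun t ht ↦ (hderiv t ht).continuousAt.continuousWithinAt) ?_
  rw [interior_Ioi]
  have hmono := (strictMono_mul_left_of_pos (by positivity : 0 < a * b * C)).comp_strictMonoOn
    (strictMonoOn_rpow_mul_const_add_mul_rpow_neg_rpow ha.le hb₁ hab hC hK)
  exact hmono.congr fun t ht ↦ (hderiv t ht).deriv.symm

end PowerOfAffinePower

theorem stmt_4 (a b C K : ℝ) (ha : 1 < a) (hb : b ∈ Set.Ioo (1 / a) 1)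
    (hC : 0 < C) (hK : 0 < K) :
    StrictConcaveOn ℝ (Set.Ioi (0 : ℝ)) (fun t : ℝ => -(C * t ^ a + K) ^ b) := by
  obtain ⟨hab, hb₁⟩ := hb
  have ha₀ : 0 < a := by linarith
  have hb₀ : 0 < b := lt_trans (by positivity) hab
  rw [div_lt_iff₀ ha₀, mul_comm] at hab
  exact (strictConvexOn_mul_rpow_add_const_rpow hb₀ hb₁.le hab hC hK.le).neg
end

section
/- Let X, T ⊆ ℝ be nondegenerate closed intervals with T ⊆ [0,∞), let π ∈ (0,1), and let u : ℝ × ℝ → ℝ be continuous on X × T, strictly increasing in its first argument on X (for each fixed t ∈ T), and strictly decreasing in its second argument on T (for each fixed x ∈ X). Suppose: (Stochastic Impatience) for all x₁ > x₂ in X and t₁ < t₂ in T, π * max(u(x₁,t₁), u(x₂,t₂)) + (1-π) * min(u(x₁,t₁), u(x₂,t₂)) ≥ π * max(u(x₁,t₂), u(x₂,t₁)) + (1-π) * min(u(x₁,t₂), u(x₂,t₁)); and (No Future Bias) for all x, y ∈ X, t, s ∈ T with t < s and τ > 0 with t+τ, s+τ ∈ T, if u(x,t) = u(y,s) then u(x,t+τ)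 ≤ u(y,s+τ). Then weak Risk Seeking over Time Lotteries holds: for all x ∈ X and all t₁, t₂ ∈ T, π * max(u(x,t₁), u(x,t₂)) + (1-π) * min(u(x,t₁), u(x,t₂)) ≥ u(x, (t₁+t₂)/2). -/
private lemma glbu_mono_le (X T : Set ℝ) (u : ℝ × ℝ → ℝ)
    (hmono : ∀ t ∈ T, StrictMonoOn (fun x => u (x, t)) X) :
    ∀ t ∈ T, ∀ p ∈ X, ∀ q ∈ X, p ≤ q → u (p, t) ≤ u (q, t) := by
  intro t ht p hp q hq hpq
  rcases eq_or_lt_of_le hpq with h | h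
  · rw [h]
  · exact le_of_lt (hmono t ht hp hq h)

private lemma glbu_anti_le (X T : Set ℝ) (u : ℝ × ℝ → ℝ)
    (himp : ∀ x ∈ X, StrictAntiOn (fun t => u (x, t)) T) :
    ∀ p ∈ X, ∀ s ∈ T, ∀ s' ∈ T, s ≤ s' → u (p, s') ≤ u (p, s) := by
  intro p hp s hs s' hs' h
  rcases eq_or_lt_of_le h with h | h
  · rw [h]
  · exact le_of_lt (himp p hp hs hs' h)

private lemma glbu_cont_x (X T : Set ℝ) (u : ℝ × ℝ → ℝ) (hcont : ContinuousOn u (X ×ˢ T))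
    (s : ℝ) (hs : s ∈ T) : ContinuousOn (fun y => u (y, s)) X := by
  have h : (fun y => u (y, s)) = u ∘ (fun y => (y, s)) := rfl
  rw [h]
  apply hcont.comp (Continuous.continuousOn (by fun_prop))
  intro y hy
  exact Set.mk_mem_prod hy hs

private lemma glbu_cont_t (X T : Set ℝ) (u : ℝ × ℝ → ℝ) (hcont : ContinuousOn u (X ×ˢ T))
    (p : ℝ) (hp : p ∈ X) : ContinuousOn (fun s => u (p, s)) T := by
  have h : (fun s => u (p, s)) = u ∘ (fun s => (p, s)) := rfl
  rw [h]
  apply hcont.comp (Continuous.continuousOn (by fun_prop))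
  intro s hs
  exact Set.mk_mem_prod hp hs

/-- Backward No Future Bias: if u(p,t) = u(q,s) with t < s, then shifting both
back in time by τ favors the later-time/higher-prize pair. -/
private lemma glbu_bwd (X T : Set ℝ) (hXc : Convex ℝ X)
    (u : ℝ × ℝ → ℝ) (hcont : ContinuousOn u (X ×ˢ T))
    (hmono : ∀ t ∈ T, StrictMonoOn (fun x => u (x, t)) X)
    (himp : ∀ x ∈ X, StrictAntiOn (fun t => u (x, t)) T)
    (hNFB : ∀ x ∈ X, ∀ y ∈ X, ∀ t ∈ T, ∀ s ∈ T, t < s → ∀ τ : ℝ, 0 < τ →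
      t + τ ∈ T → s + τ ∈ T → u (x, t) = u (y, s) → u (x, t + τ) ≤ u (y, s + τ)) :
    ∀ p ∈ X, ∀ q ∈ X, ∀ t ∈ T, ∀ s ∈ T, t < s → ∀ τ : ℝ, 0 < τ →
      t - τ ∈ T → s - τ ∈ T → u (p, t) = u (q, s) → u (q, s - τ) ≤ u (p, t - τ) := by
  intro p hp q hq t ht s hs hts τ hτ htT hsT heq
  by_contra hcon
  push_neg at hcon
  have hpq : p < q := by
    have h1 : u (p, s) < u (p, t) := himp p hp ht hs hts
    by_contra hh
    push_neg at hh
    have h2 := glbu_mono_le X T u hmono s hs q hq p hp hh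
    rw [← heq] at h2
    linarith
  have hsub : Set.Icc p q ⊆ X := hXc.ordConnected.out hp hq
  have hcx : ContinuousOn (fun y => u (y, s - τ)) (Set.Icc p q) :=
    (glbu_cont_x X T u hcont (s - τ) hsT).mono hsub
  have hfp : u (p, s - τ) < u (p, t - τ) := himp p hp htT hsT (by linarith)
  obtain ⟨y, hymem, hyeq0⟩ :=
    intermediate_value_Icc (le_of_lt hpq) hcx ⟨le_of_lt hfp, le_of_lt hcon⟩
  have hyeq : u (y, s - τ) = u (p, t - τ) := hyeq0
  have hyX : y ∈ X := hsub hymem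
  have hyq : y < q := by
    by_contra hh
    push_neg at hh
    have h2 := glbu_mono_le X T u hmono (s - τ) hsT q hq y hyX hh
    rw [hyeq] at h2
    linarith
  have hnfb := hNFB p hp y hyX (t - τ) htT (s - τ) hsT (by linarith) τ hτ
    (by rw [sub_add_cancel]; exact ht) (by rw [sub_add_cancel]; exact hs) hyeq.symm
  rw [sub_add_cancel, sub_add_cancel] at hnfb
  have hlast : u (y, s) < u (q, s) := hmono s hs hyX hq hyq
  rw [← heq] at hlast
  linarith

private lemma glbu_key (X T : Set ℝ) (hXc : Convex ℝ X)
    (hXnd : ∃ x y, x ∈ X ∧ y ∈ X ∧ x ≠ y)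
    (hTc : Convex ℝ T)
    (π : ℝ) (hπ : π ∈ Set.Ioo (0 : ℝ) 1)
    (u : ℝ × ℝ → ℝ) (hcont : ContinuousOn u (X ×ˢ T))
    (hmono : ∀ t ∈ T, StrictMonoOn (fun x => u (x, t)) X)
    (himp : ∀ x ∈ X, StrictAntiOn (fun t => u (x, t)) T)
    (hSI : ∀ x₁ ∈ X, ∀ x₂ ∈ X, x₂ < x₁ → ∀ t₁ ∈ T, ∀ t₂ ∈ T, t₁ < t₂ →
      π * max (u (x₁, t₁)) (u (x₂, t₂)) + (1 - π) * min (u (x₁, t₁)) (u (x₂, t₂)) ≥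
        π * max (u (x₁, t₂)) (u (x₂, t₁)) + (1 - π) * min (u (x₁, t₂)) (u (x₂, t₁)))
    (hNFB : ∀ x ∈ X, ∀ y ∈ X, ∀ t ∈ T, ∀ s ∈ T, t < s → ∀ τ : ℝ, 0 < τ →
      t + τ ∈ T → s + τ ∈ T → u (x, t) = u (y, s) → u (x, t + τ) ≤ u (y, s + τ)) :
    ∀ x ∈ X, ∀ t₁ ∈ T, ∀ t₂ ∈ T, t₁ < t₂ →
      u (x, (t₁ + t₂) / 2) ≤ π * u (x, t₁) + (1 - π) * u (x, t₂) := by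
  obtain ⟨hπ0, hπ1⟩ := hπ
  intro x hx t₁ ht₁ t₂ ht₂ hlt
  set m := (t₁ + t₂) / 2 with hm
  set τ := (t₂ - t₁) / 2 with hτdef
  have hτpos : (0:ℝ) < τ := by rw [hτdef]; linarith
  have memT : ∀ s : ℝ, t₁ ≤ s → s ≤ t₂ → s ∈ T := fun s h1 h2 =>
    hTc.ordConnected.out ht₁ ht₂ ⟨h1, h2⟩
  have hmT : m ∈ T := memT m (by rw [hm]; linarith) (by rw [hm]; linarith)
  have ht1m : t₁ = m - τ := by rw [hm, hτdef]; ring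
  have ht2m : t₂ = m + τ := by rw [hm, hτdef]; ring
  rw [ht1m, ht2m]
  -- membership of symmetric points
  have memTm : ∀ w : ℝ, 0 ≤ w → w ≤ τ → m - w ∈ T ∧ m + w ∈ T := by
    intro w h0 h1
    constructor
    · exact memT _ (by linarith [ht1m]) (by linarith [ht2m])
    · exact memT _ (by linarith [ht1m]) (by linarith [ht2m])
  -- get a second prize on one side of x
  obtain ⟨p, q, hpX, hqX, hpq⟩ := hXnd
  have hP0 : u (x, m) ≤ π * u (x, m - 0) + (1 - π) * u (x, m + 0) := by
    rw [sub_zero, add_zero]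
    have : π * u (x, m) + (1 - π) * u (x, m) = u (x, m) := by ring
    linarith
  rcases lt_or_ge x (max p q) with hbside | haside
  · -- b-side: there is b ∈ X with x < b
    set b := max p q with hbdef
    have hbX : b ∈ X := by
      rw [hbdef]; rcases le_total p q with h | h
      · rwa [max_eq_right h]
      · rwa [max_eq_left h]
    -- base step
    have hbase : ∀ w : ℝ, 0 < w → w ≤ τ → u (x, m) ≤ u (b, m + w) →
        u (x, m) ≤ π * u (x, m - w) + (1 - π) * u (x, m + w) := by
      intro w hw0 hwτ hcond
      obtain ⟨hT1, hT2⟩ := memTm w hw0.le hwτ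
      have hxc : u (x, m + w) < u (x, m) := himp x hx hmT hT2 (by linarith)
      -- IVT in prize at time m + w on [x, b]
      obtain ⟨x₁, hx₁mem, hx₁eq0⟩ :=
        intermediate_value_Icc (le_of_lt hbside)
          ((glbu_cont_x X T u hcont (m + w) hT2).mono (hXc.ordConnected.out hx hbX))
          ⟨le_of_lt hxc, hcond⟩
      have hx₁eq : u (x₁, m + w) = u (x, m) := hx₁eq0
      have hx₁X : x₁ ∈ X := hXc.ordConnected.out hx hbX hx₁mem
      have hxx₁ : x < x₁ := by
        by_contra hh
        push_neg at hh
        have h2 := glbu_mono_le X T u hmono (m + w) hT2 x₁ hx₁X x hx hh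
        rw [hx₁eq] at h2
        linarith
      have hSI1 := hSI x₁ hx₁X x hx hxx₁ m hmT (m + w) hT2 (by linarith)
      have hle1 : u (x, m + w) ≤ u (x₁, m) := by
        have h3 : u (x₁, m + w) < u (x₁, m) := himp x₁ hx₁X hmT hT2 (by linarith)
        rw [hx₁eq] at h3
        linarith
      rw [max_eq_left hle1, min_eq_right hle1, hx₁eq, max_self, min_self] at hSI1
      -- backward NFB: u(x₁, m) ≤ u(x, m - w)
      have hbwd := glbu_bwd X T hXc u hcont hmono himp hNFB x hx x₁ hx₁X m hmT
        (m + w) hT2 (by linarith) w hw0 hT1 (by rw [add_sub_cancel_right]; exact hmT)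
        hx₁eq.symm
      rw [add_sub_cancel_right] at hbwd
      have p2 : π * u (x₁, m) ≤ π * u (x, m - w) :=
        mul_le_mul_of_nonneg_left hbwd (le_of_lt hπ0)
      have hring : π * u (x, m) + (1 - π) * u (x, m) = u (x, m) := by ring
      linarith
    rcases le_or_gt (u (x, m)) (u (b, t₂)) with hB1 | hB2
    · -- base applies at full width
      apply hbase τ hτpos le_rfl
      rwa [← ht2m]
    · -- find s₂ ∈ (m, t₂) with u(b, s₂) = u(x, m)
      have hubm : u (x, m) < u (b, m) := hmono m hmT hx hbX hbside
      obtain ⟨s₂, hs₂mem, hs₂0⟩ :=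
        intermediate_value_Icc' (show m ≤ t₂ by rw [hm]; linarith)
          ((glbu_cont_t X T u hcont b hbX).mono
            (fun z hz => memT z (le_trans (by rw [hm]; linarith) hz.1) hz.2))
          ⟨le_of_lt hB2, le_of_lt hubm⟩
      have hs₂ : u (b, s₂) = u (x, m) := hs₂0
      have hs₂T : s₂ ∈ T := memT s₂ (le_trans (by rw [hm]; linarith) hs₂mem.1) hs₂mem.2
      have hms₂ : m < s₂ := by
        rcases eq_or_lt_of_le hs₂mem.1 with h | h
        · exfalso; rw [← h] at hs₂; linarith
        · exact h
      have hs₂t₂ : s₂ < t₂ := by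
        rcases eq_or_lt_of_le hs₂mem.2 with h | h
        · exfalso; rw [h] at hs₂; linarith
        · exact h
      set L := s₂ - m with hLdef
      have hL0 : 0 < L := by rw [hLdef]; linarith
      have hLτ : L < τ := by linarith [hLdef, ht2m]
      have ind : ∀ n : ℕ, ∀ w : ℝ, 0 ≤ w → w ≤ τ → w ≤ n * L →
          u (x, m) ≤ π * u (x, m - w) + (1 - π) * u (x, m + w) := by
        intro n
        induction n with
        | zero =>
          intro w h0 hwτ hn
          have hw : w = 0 := le_antisymm (by simpa using hn) h0
          rw [hw]; exact hP0
        | succ n ih =>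
          intro w h0 hwτ hn
          by_cases hwL : w ≤ L
          · rcases eq_or_lt_of_le h0 with h | h
            · rw [← h]; exact hP0
            · apply hbase w h hwτ
              have h1 : m + w ≤ s₂ := by rw [hLdef] at hwL; linarith
              have h2 := glbu_anti_le X T u himp b hbX (m + w)
                (memTm w h0 hwτ).2 s₂ hs₂T h1
              rw [hs₂] at h2
              exact h2
          · push_neg at hwL
            have hn' : w ≤ (n + 1 : ℝ) * L := by exact_mod_cast hn
            have hIH := ih (w - L) (by linarith) (by linarith)
              (by push_cast; linarith)
            obtain ⟨hT1, hT2⟩ := memTm w h0 hwτ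
            obtain ⟨hT1', hT2'⟩ := memTm (w - L) (by linarith) (by linarith)
            -- SI with prizes (b, x), times (m - (w - L), m + w)
            have hSI2 := hSI b hbX x hx hbside (m - (w - L)) hT1' (m + w) hT2
              (by linarith)
            -- backward NFB: u(b, m - (w - L)) ≤ u(x, m - w)
            have hbwd := glbu_bwd X T hXc u hcont hmono himp hNFB x hx b hbX m hmT
              s₂ hs₂T hms₂ w (by linarith) hT1
              (by rw [show s₂ - w = m - (w - L) by rw [hLdef]; ring]; exact hT1')
              hs₂.symm
            rw [show s₂ - w = m - (w - L) by rw [hLdef]; ring] at hbwd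
            -- forward NFB: u(x, m + (w - L)) ≤ u(b, m + w)
            have hfwd := hNFB x hx b hbX m hmT s₂ hs₂T hms₂ (w - L) (by linarith)
              hT2' (by rw [show s₂ + (w - L) = m + w by rw [hLdef]; ring]; exact hT2)
              hs₂.symm
            rw [show s₂ + (w - L) = m + w by rw [hLdef]; ring] at hfwd
            -- identify max/min in hSI2
            have hv1 : u (x, m) < u (b, m - (w - L)) := by
              have h3 : u (b, s₂) < u (b, m - (w - L)) := himp b hbX hT1' hs₂T
                (by linarith [hLdef])
              rwa [hs₂] at h3
            have hv2 : u (x, m + w) < u (x, m) := himp x hx hmT hT2 (by linarith)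
            have hv3 : u (b, m + w) < u (x, m) := by
              have h3 : u (b, m + w) < u (b, s₂) := himp b hbX hs₂T hT2
                (by linarith [hLdef])
              rwa [hs₂] at h3
            have hv4 : u (x, m) < u (x, m - (w - L)) := himp x hx hT1' hmT
              (by linarith)
            rw [max_eq_left (by linarith : u (x, m + w) ≤ u (b, m - (w - L))),
              min_eq_right (by linarith : u (x, m + w) ≤ u (b, m - (w - L))),
              max_eq_right (by linarith : u (b, m + w) ≤ u (x, m - (w - L))),
              min_eq_left (by linarith : u (b, m + w) ≤ u (x, m - (w - L)))] at hSI2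
            have p1 : π * u (b, m - (w - L)) ≤ π * u (x, m - w) :=
              mul_le_mul_of_nonneg_left hbwd (le_of_lt hπ0)
            have p2 : (1 - π) * u (x, m + (w - L)) ≤ (1 - π) * u (b, m + w) :=
              mul_le_mul_of_nonneg_left hfwd (by linarith)
            linarith
      obtain ⟨n, hn⟩ := exists_nat_ge (τ / L)
      exact ind n τ hτpos.le le_rfl (by rw [div_le_iff₀ hL0] at hn; linarith)
  · -- a-side: there is a ∈ X with a < x
    set a := min p q with hadef
    have haX : a ∈ X := by
      rw [hadef]; rcases le_total p q with h | h
      · rwa [min_eq_left h]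
      · rwa [min_eq_right h]
    have halt : a < x := by
      have h1 : min p q < max p q := min_lt_max.mpr hpq
      rw [hadef]; linarith
    have huam : u (a, m) < u (x, m) := hmono m hmT haX hx halt
    -- base step
    have hbase : ∀ w : ℝ, 0 < w → w ≤ τ → u (a, m - w) ≤ u (x, m) →
        u (x, m) ≤ π * u (x, m - w) + (1 - π) * u (x, m + w) := by
      intro w hw0 hwτ hcond
      obtain ⟨hT1, hT2⟩ := memTm w hw0.le hwτ
      have hxc : u (x, m) < u (x, m - w) := himp x hx hT1 hmT (by linarith)
      obtain ⟨x₂, hx₂mem, hx₂eq0⟩ :=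
        intermediate_value_Icc (le_of_lt halt)
          ((glbu_cont_x X T u hcont (m - w) hT1).mono (hXc.ordConnected.out haX hx))
          ⟨hcond, le_of_lt hxc⟩
      have hx₂eq : u (x₂, m - w) = u (x, m) := hx₂eq0
      have hx₂X : x₂ ∈ X := hXc.ordConnected.out haX hx hx₂mem
      have hx₂x : x₂ < x := by
        by_contra hh
        push_neg at hh
        have h2 := glbu_mono_le X T u hmono (m - w) hT1 x hx x₂ hx₂X hh
        rw [hx₂eq] at h2
        linarith
      have hSI1 := hSI x hx x₂ hx₂X hx₂x (m - w) hT1 m hmT (by linarith)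
      have hle1 : u (x₂, m) ≤ u (x, m - w) := by
        have h3 : u (x₂, m) < u (x₂, m - w) := himp x₂ hx₂X hT1 hmT (by linarith)
        rw [hx₂eq] at h3
        linarith
      rw [max_eq_left hle1, min_eq_right hle1, hx₂eq, max_self, min_self] at hSI1
      -- forward NFB: u(x₂, m) ≤ u(x, m + w)
      have hfwd := hNFB x₂ hx₂X x hx (m - w) hT1 m hmT (by linarith) w hw0
        (by rw [sub_add_cancel]; exact hmT) hT2 hx₂eq
      rw [sub_add_cancel] at hfwd
      have p1 : (1 - π) * u (x₂, m) ≤ (1 - π) * u (x, m + w) :=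
        mul_le_mul_of_nonneg_left hfwd (by linarith)
      have hring : π * u (x, m) + (1 - π) * u (x, m) = u (x, m) := by ring
      linarith
    rcases le_or_gt (u (a, t₁)) (u (x, m)) with hA1 | hA2
    · apply hbase τ hτpos le_rfl
      rwa [← ht1m]
    · -- find s₁ ∈ (t₁, m) with u(a, s₁) = u(x, m)
      obtain ⟨s₁, hs₁mem, hs₁0⟩ :=
        intermediate_value_Icc' (show t₁ ≤ m by rw [hm]; linarith)
          ((glbu_cont_t X T u hcont a haX).mono
            (fun z hz => memT z hz.1 (le_trans hz.2 (by rw [hm]; linarith))))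
          ⟨le_of_lt huam, le_of_lt hA2⟩
      have hs₁ : u (a, s₁) = u (x, m) := hs₁0
      have hs₁T : s₁ ∈ T := memT s₁ hs₁mem.1 (le_trans hs₁mem.2 (by rw [hm]; linarith))
      have ht₁s₁ : t₁ < s₁ := by
        rcases eq_or_lt_of_le hs₁mem.1 with h | h
        · exfalso; rw [← h] at hs₁; linarith
        · exact h
      have hs₁m : s₁ < m := by
        rcases eq_or_lt_of_le hs₁mem.2 with h | h
        · exfalso; rw [h] at hs₁; linarith
        · exact h
      set L := m - s₁ with hLdef
      have hL0 : 0 < L := by rw [hLdef]; linarith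
      have hLτ : L < τ := by linarith [hLdef, ht1m]
      have ind : ∀ n : ℕ, ∀ w : ℝ, 0 ≤ w → w ≤ τ → w ≤ n * L →
          u (x, m) ≤ π * u (x, m - w) + (1 - π) * u (x, m + w) := by
        intro n
        induction n with
        | zero =>
          intro w h0 hwτ hn
          have hw : w = 0 := le_antisymm (by simpa using hn) h0
          rw [hw]; exact hP0
        | succ n ih =>
          intro w h0 hwτ hn
          by_cases hwL : w ≤ L
          · rcases eq_or_lt_of_le h0 with h | h
            · rw [← h]; exact hP0
            · apply hbase w h hwτ
              have h1 : s₁ ≤ m - w := by rw [hLdef] at hwL; linarith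
              have h2 := glbu_anti_le X T u himp a haX s₁ hs₁T (m - w)
                (memTm w h0 hwτ).1 h1
              rw [hs₁] at h2
              exact h2
          · push_neg at hwL
            have hn' : w ≤ (n + 1 : ℝ) * L := by exact_mod_cast hn
            have hIH := ih (w - L) (by linarith) (by linarith)
              (by push_cast; linarith)
            obtain ⟨hT1, hT2⟩ := memTm w h0 hwτ
            obtain ⟨hT1', hT2'⟩ := memTm (w - L) (by linarith) (by linarith)
            -- SI with prizes (x, a), times (m - w, m + (w - L))
            have hSI2 := hSI x hx a haX halt (m - w) hT1 (m + (w - L)) hT2'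
              (by linarith)
            -- forward NFB: u(a, m + (w - L)) ≤ u(x, m + w)
            have hfwd := hNFB a haX x hx s₁ hs₁T m hmT hs₁m w (by linarith)
              (by rw [show s₁ + w = m + (w - L) by rw [hLdef]; ring]; exact hT2') hT2
              hs₁
            rw [show s₁ + w = m + (w - L) by rw [hLdef]; ring] at hfwd
            -- backward NFB: u(x, m - (w - L)) ≤ u(a, m - w)
            have hbwd := glbu_bwd X T hXc u hcont hmono himp hNFB a haX x hx s₁ hs₁T
              m hmT hs₁m (w - L) (by linarith)
              (by rw [show s₁ - (w - L) = m - w by rw [hLdef]; ring]; exact hT1) hT1'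
              hs₁
            rw [show s₁ - (w - L) = m - w by rw [hLdef]; ring] at hbwd
            -- identify max/min in hSI2
            have hv1 : u (x, m) < u (x, m - w) := himp x hx hT1 hmT (by linarith)
            have hv2 : u (a, m + (w - L)) < u (x, m) := by
              have h3 : u (a, m + (w - L)) < u (a, s₁) := himp a haX hs₁T hT2'
                (by linarith [hLdef])
              rwa [hs₁] at h3
            have hv3 : u (x, m + (w - L)) < u (x, m) := himp x hx hmT hT2'
              (by linarith)
            have hv4 : u (x, m) < u (a, m - w) := by
              have h3 : u (a, s₁) < u (a, m - w) := himp a haX hT1 hs₁T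
                (by linarith [hLdef])
              rwa [hs₁] at h3
            rw [max_eq_left (by linarith : u (a, m + (w - L)) ≤ u (x, m - w)),
              min_eq_right (by linarith : u (a, m + (w - L)) ≤ u (x, m - w)),
              max_eq_right (by linarith : u (x, m + (w - L)) ≤ u (a, m - w)),
              min_eq_left (by linarith : u (x, m + (w - L)) ≤ u (a, m - w))] at hSI2
            have p1 : (1 - π) * u (a, m + (w - L)) ≤ (1 - π) * u (x, m + w) :=
              mul_le_mul_of_nonneg_left hfwd (by linarith)
            have p2 : π * u (x, m - (w - L)) ≤ π * u (a, m - w) :=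
              mul_le_mul_of_nonneg_left hbwd (le_of_lt hπ0)
            linarith
      obtain ⟨n, hn⟩ := exists_nat_ge (τ / L)
      exact ind n τ hτpos.le le_rfl (by rw [div_le_iff₀ hL0] at hn; linarith)

theorem stmt_5 (X T : Set ℝ) (hXc : Convex ℝ X) (hXcl : IsClosed X)
    (hXnd : ∃ x y, x ∈ X ∧ y ∈ X ∧ x ≠ y)
    (hTc : Convex ℝ T) (hTcl : IsClosed T)
    (hTnd : ∃ s t, s ∈ T ∧ t ∈ T ∧ s ≠ t)
    (hT0 : T ⊆ Set.Ici (0 : ℝ))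
    (π : ℝ) (hπ : π ∈ Set.Ioo (0 : ℝ) 1)
    (u : ℝ × ℝ → ℝ) (hcont : ContinuousOn u (X ×ˢ T))
    (hmono : ∀ t ∈ T, StrictMonoOn (fun x => u (x, t)) X)
    (himp : ∀ x ∈ X, StrictAntiOn (fun t => u (x, t)) T)
    (hSI : ∀ x₁ ∈ X, ∀ x₂ ∈ X, x₂ < x₁ → ∀ t₁ ∈ T, ∀ t₂ ∈ T, t₁ < t₂ →
      π * max (u (x₁, t₁)) (u (x₂, t₂)) + (1 - π) * min (u (x₁, t₁)) (u (x₂, t₂)) ≥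
        π * max (u (x₁, t₂)) (u (x₂, t₁)) + (1 - π) * min (u (x₁, t₂)) (u (x₂, t₁)))
    (hNFB : ∀ x ∈ X, ∀ y ∈ X, ∀ t ∈ T, ∀ s ∈ T, t < s → ∀ τ : ℝ, 0 < τ →
      t + τ ∈ T → s + τ ∈ T → u (x, t) = u (y, s) → u (x, t + τ) ≤ u (y, s + τ)) :
    ∀ x ∈ X, ∀ t₁ ∈ T, ∀ t₂ ∈ T,
      π * max (u (x, t₁)) (u (x, t₂)) + (1 - π) * min (u (x, t₁)) (u (x, t₂)) ≥
        u (x, (t₁ + t₂) / 2) := by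
  intro x hx t₁ ht₁ t₂ ht₂
  rcases lt_trichotomy t₁ t₂ with h | h | h
  · have key := glbu_key X T hXc hXnd hTc π hπ u hcont hmono himp hSI hNFB
      x hx t₁ ht₁ t₂ ht₂ h
    have hlt : u (x, t₂) < u (x, t₁) := himp x hx ht₁ ht₂ h
    rw [max_eq_left hlt.le, min_eq_right hlt.le]
    exact key
  · rw [h]
    rw [show (t₂ + t₂) / 2 = t₂ by ring, max_self, min_self]
    have : π * u (x, t₂) + (1 - π) * u (x, t₂) = u (x, t₂) := by ring
    linarith
  · have key := glbu_key X T hXc hXnd hTc π hπ u hcont hmono himp hSI hNFB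
      x hx t₂ ht₂ t₁ ht₁ h
    have hlt : u (x, t₁) < u (x, t₂) := himp x hx ht₂ ht₁ h
    rw [max_eq_right hlt.le, min_eq_left hlt.le]
    rw [show (t₁ + t₂) / 2 = (t₂ + t₁) / 2 by ring]
    exact key
end

section
/- Let X ⊆ ℝ and T ⊆ [0,∞) be closed intervals each having a minimum, and let Δ be the set of finitely supported probability measures on ℝ × ℝ whose support is contained in X × T, equipped with the topology of weak convergence of probability measures. Let ≿ be a relation on Δ satisfying: (Completeness) for all p, q ∈ Δ, p ≿ q or q ≿ p; (Transitivity); (Outcome Monotonicity) for x > y in X and s ∈ T, δ(x,s) ≻ δ(y,s); (Impatience) for x ∈ X and t < s in T, δ(x,t) ≻ δ(x,s); (Continuity) for every p ∈ Δ, the sets {q ∈ Δ : p ≿ q} and {q ∈ Δ : q ≿ p} are closed in Δ; (Weak Certainty Independence) for all Dirac measures p, q, r ∈ Δ, p ≿ q implies ½p + ½r ≿ ½q + ½r; (Stochastic Impatience) for t₁ < t₂ in T and x₁ > x₂ in X, ½δ(x₁,t₁) + ½δ(x₂,t₂) ≿ ½δ(x₁,t₂) + ½δ(x₂,t₁); (No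 Future Bias) for x, y ∈ X and t < s in T and τ > 0 with t+τ, s+τ ∈ T, if δ(x,t) ≿ δ(y,s) and δ(y,s) ≿ δ(x,t) then δ(y,s+τ) ≿ δ(x,t+τ). Then for every (x,t) in the interior of X × T there exists s > 0 such that for every τ ∈ (0,s), ½δ(x,t-τ) + ½δ(x,t+τ) ≿ δ(x,t). -/
open MeasureTheory

/-- The Dirac probability measure at a point of `ℝ × ℝ`. -/
noncomputable def dirac2 (z : ℝ × ℝ) : ProbabilityMeasure (ℝ × ℝ) :=
  ⟨Measure.dirac z, inferInstance⟩

/-- The equal-weight mixture `½ p + ½ q` of two probability measures. -/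
noncomputable def mix2 (p q : ProbabilityMeasure (ℝ × ℝ)) : ProbabilityMeasure (ℝ × ℝ) :=
  ⟨(1/2 : ENNReal) • (p : Measure (ℝ × ℝ)) + (1/2 : ENNReal) • (q : Measure (ℝ × ℝ)), by
    constructor
    simp [ENNReal.div_add_div_same]
    rw [ENNReal.inv_two_add_inv_two]⟩

/-- Finitely supported probability measures with support contained in `X ×ˢ T`. -/
def FinSuppIn (X T : Set ℝ) : Set (ProbabilityMeasure (ℝ × ℝ)) :=
  {p | ∃ s : Finset (ℝ × ℝ), ↑s ⊆ X ×ˢ T ∧ (p : Measure (ℝ × ℝ)) ↑s = 1}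

lemma dirac2_continuous : Continuous dirac2 := by
  rw [continuous_iff_continuousAt]
  intro z
  rw [ContinuousAt, ProbabilityMeasure.tendsto_iff_forall_integral_tendsto]
  intro f
  have : ∀ w : ℝ × ℝ, (∫ ω, f ω ∂((dirac2 w : ProbabilityMeasure (ℝ × ℝ)) : Measure (ℝ × ℝ))) = f w := by
    intro w
    simp [dirac2, integral_dirac]
  simp only [this]
  exact (f.continuous.tendsto z)

lemma mix2_comm (p q : ProbabilityMeasure (ℝ × ℝ)) : mix2 p q = mix2 q p := by
  apply Subtype.ext
  simp [mix2, add_comm]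

lemma mix2_self (p : ProbabilityMeasure (ℝ × ℝ)) : mix2 p p = p := by
  apply Subtype.ext
  show (1/2 : ENNReal) • (p : Measure (ℝ × ℝ)) + (1/2 : ENNReal) • (p : Measure (ℝ × ℝ)) = _
  rw [← add_smul]
  norm_num
  rw [ENNReal.inv_two_add_inv_two, one_smul]

lemma dirac2_mem {X T : Set ℝ} {z : ℝ × ℝ} (hz : z ∈ X ×ˢ T) : dirac2 z ∈ FinSuppIn X T := by
  refine ⟨{z}, by simpa using hz, ?_⟩
  simp [dirac2]

lemma mix2_dirac_mem {X T : Set ℝ} {a b : ℝ × ℝ} (ha : a ∈ X ×ˢ T) (hb : b ∈ X ×ˢ T) :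
    mix2 (dirac2 a) (dirac2 b) ∈ FinSuppIn X T := by
  refine ⟨{a, b}, ?_, ?_⟩
  · intro z hz
    simp only [Finset.coe_insert, Finset.coe_singleton, Set.mem_insert_iff,
      Set.mem_singleton_iff] at hz
    rcases hz with h | h <;> subst h <;> assumption
  · show ((1/2 : ENNReal) • (Measure.dirac a) + (1/2 : ENNReal) • (Measure.dirac b)) _ = 1
    have hmeas : MeasurableSet (↑({a, b} : Finset (ℝ × ℝ)) : Set (ℝ × ℝ)) :=
      (Finset.finite_toSet _).measurableSet
    have ha' : a ∈ (↑({a, b} : Finset (ℝ × ℝ)) : Set (ℝ × ℝ)) := by simp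
    have hb' : b ∈ (↑({a, b} : Finset (ℝ × ℝ)) : Set (ℝ × ℝ)) := by simp
    rw [Measure.add_apply, Measure.smul_apply, Measure.smul_apply,
      Measure.dirac_apply' _ hmeas, Measure.dirac_apply' _ hmeas]
    simp [ha', hb']
    rw [ENNReal.inv_two_add_inv_two]
theorem stmt_6 (X T : Set ℝ)
    (hXc : Convex ℝ X) (hXcl : IsClosed X) (hXmin : ∃ m, IsLeast X m)
    (hTc : Convex ℝ T) (hTcl : IsClosed T) (hTmin : ∃ m, IsLeast T m)
    (hT0 : T ⊆ Set.Ici (0 : ℝ))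
    (R : ProbabilityMeasure (ℝ × ℝ) → ProbabilityMeasure (ℝ × ℝ) → Prop)
    -- Completeness
    (hcomp : ∀ p ∈ FinSuppIn X T, ∀ q ∈ FinSuppIn X T, R p q ∨ R q p)
    -- Transitivity
    (htrans : ∀ p ∈ FinSuppIn X T, ∀ q ∈ FinSuppIn X T, ∀ r ∈ FinSuppIn X T,
      R p q → R q r → R p r)
    -- Outcome Monotonicity
    (hmono : ∀ x ∈ X, ∀ y ∈ X, y < x → ∀ s ∈ T,
      R (dirac2 (x, s)) (dirac2 (y, s)) ∧ ¬ R (dirac2 (y, s)) (dirac2 (x, s)))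
    -- Impatience
    (himp : ∀ x ∈ X, ∀ t ∈ T, ∀ s ∈ T, t < s →
      R (dirac2 (x, t)) (dirac2 (x, s)) ∧ ¬ R (dirac2 (x, s)) (dirac2 (x, t)))
    -- Continuity: upper and lower contour sets are closed in Δ (weak topology)
    (hcont : ∀ p ∈ FinSuppIn X T,
      IsClosed {q : FinSuppIn X T | R p ↑q} ∧ IsClosed {q : FinSuppIn X T | R ↑q p})
    -- Weak Certainty Independence
    (hWCI : ∀ a ∈ X ×ˢ T, ∀ b ∈ X ×ˢ T, ∀ c ∈ X ×ˢ T,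
      R (dirac2 a) (dirac2 b) →
        R (mix2 (dirac2 a) (dirac2 c)) (mix2 (dirac2 b) (dirac2 c)))
    -- Stochastic Impatience
    (hSI : ∀ t₁ ∈ T, ∀ t₂ ∈ T, t₁ < t₂ → ∀ x₁ ∈ X, ∀ x₂ ∈ X, x₂ < x₁ →
      R (mix2 (dirac2 (x₁, t₁)) (dirac2 (x₂, t₂)))
        (mix2 (dirac2 (x₁, t₂)) (dirac2 (x₂, t₁))))
    -- No Future Bias
    (hNFB : ∀ x ∈ X, ∀ y ∈ X, ∀ t ∈ T, ∀ s ∈ T, t < s → ∀ τ : ℝ, 0 < τ →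
      t + τ ∈ T → s + τ ∈ T →
      R (dirac2 (x, t)) (dirac2 (y, s)) → R (dirac2 (y, s)) (dirac2 (x, t)) →
        R (dirac2 (y, s + τ)) (dirac2 (x, t + τ))) :
    ∀ x t : ℝ, (x, t) ∈ interior (X ×ˢ T) →
      ∃ s > 0, ∀ τ ∈ Set.Ioo (0 : ℝ) s,
        R (mix2 (dirac2 (x, t - τ)) (dirac2 (x, t + τ))) (dirac2 (x, t)) := by
  intro x t hxt
  rw [interior_prod_eq] at hxt
  obtain ⟨hx, ht⟩ := hxt
  have hxX : x ∈ X := interior_subset hx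
  have htT : t ∈ T := interior_subset ht
  obtain ⟨ε₁, hε₁, hball₁⟩ := Metric.isOpen_iff.mp isOpen_interior x hx
  obtain ⟨ε₂, hε₂, hball₂⟩ := Metric.isOpen_iff.mp isOpen_interior t ht
  set y₀ : ℝ := x - ε₁ / 2 with hy₀def
  have hy₀X : y₀ ∈ X := by
    apply interior_subset (hball₁ ?_)
    rw [Metric.mem_ball, Real.dist_eq]
    have : y₀ - x = -(ε₁ / 2) := by rw [hy₀def]; ring
    rw [this, abs_neg, abs_of_pos (by linarith)]
    linarith
  have hy₀lt : y₀ < x := by rw [hy₀def]; linarith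
  set p₀ : ProbabilityMeasure (ℝ × ℝ) := dirac2 (x, t) with hp₀def
  have hp₀ : p₀ ∈ FinSuppIn X T := dirac2_mem (Set.mk_mem_prod hxX htT)
  obtain ⟨C, hCcl, hCeq⟩ := isClosed_induced_iff.mp (hcont p₀ hp₀).2
  obtain ⟨C₁, hC₁cl, hC₁eq⟩ := isClosed_induced_iff.mp (hcont p₀ hp₀).1
  have hCiff : ∀ q (hq : q ∈ FinSuppIn X T), q ∈ C ↔ R q p₀ := by
    intro q hq
    have := Set.ext_iff.mp hCeq ⟨q, hq⟩
    simpa using this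
  have hC₁iff : ∀ q (hq : q ∈ FinSuppIn X T), q ∈ C₁ ↔ R p₀ q := by
    intro q hq
    have := Set.ext_iff.mp hC₁eq ⟨q, hq⟩
    simpa using this
  -- the map τ ↦ δ(y₀, t - τ)
  have hgcont : Continuous (fun τ : ℝ => dirac2 (y₀, t - τ)) :=
    dirac2_continuous.comp (continuous_const.prodMk (continuous_const.sub continuous_id))
  have h0notC : dirac2 (y₀, t) ∉ C := by
    rw [hCiff _ (dirac2_mem (Set.mk_mem_prod hy₀X htT))]
    exact (hmono x hxX y₀ hy₀X hy₀lt t htT).2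
  have hUopen : IsOpen ((fun τ : ℝ => dirac2 (y₀, t - τ)) ⁻¹' Cᶜ) :=
    hCcl.isOpen_compl.preimage hgcont
  have h0mem : (0 : ℝ) ∈ (fun τ : ℝ => dirac2 (y₀, t - τ)) ⁻¹' Cᶜ := by
    simpa using h0notC
  obtain ⟨s₁, hs₁, hballs₁⟩ := Metric.isOpen_iff.mp hUopen 0 h0mem
  refine ⟨min s₁ ε₂, lt_min hs₁ hε₂, ?_⟩
  rintro τ ⟨hτ0, hτs⟩
  have hτs₁ : τ < s₁ := lt_of_lt_of_le hτs (min_le_left _ _)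
  have hτε₂ : τ < ε₂ := lt_of_lt_of_le hτs (min_le_right _ _)
  have htmτ : t - τ ∈ T := by
    apply interior_subset (hball₂ ?_)
    rw [Metric.mem_ball, Real.dist_eq]
    have : t - τ - t = -τ := by ring
    rw [this, abs_neg, abs_of_pos hτ0]
    exact hτε₂
  have htpτ : t + τ ∈ T := by
    apply interior_subset (hball₂ ?_)
    rw [Metric.mem_ball, Real.dist_eq]
    have : t + τ - t = τ := by ring
    rw [this, abs_of_pos hτ0]
    exact hτε₂
  have hy₀notC : dirac2 (y₀, t - τ) ∉ C := by
    apply hballs₁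
    rw [Metric.mem_ball, Real.dist_eq]
    simpa [abs_of_pos hτ0] using hτs₁
  -- find the indifference point y via connectedness of Icc y₀ x
  have hIccX : Set.Icc y₀ x ⊆ X := hXc.ordConnected.out hy₀X hxX
  have hhcont : Continuous (fun y : ℝ => dirac2 (y, t - τ)) :=
    dirac2_continuous.comp (continuous_id.prodMk continuous_const)
  have hmemIcc : ∀ y ∈ Set.Icc y₀ x, dirac2 (y, t - τ) ∈ FinSuppIn X T :=
    fun y hy => dirac2_mem (Set.mk_mem_prod (hIccX hy) htmτ)
  have key := isPreconnected_closed_iff.mp isPreconnected_Icc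
    ((fun y : ℝ => dirac2 (y, t - τ)) ⁻¹' C₁) ((fun y : ℝ => dirac2 (y, t - τ)) ⁻¹' C)
    (hC₁cl.preimage hhcont) (hCcl.preimage hhcont)
    (by
      intro y hy
      rcases hcomp p₀ hp₀ _ (hmemIcc y hy) with h | h
      · exact Or.inl ((hC₁iff _ (hmemIcc y hy)).mpr h)
      · exact Or.inr ((hCiff _ (hmemIcc y hy)).mpr h))
    (by
      refine ⟨y₀, ⟨le_refl _, le_of_lt hy₀lt⟩, ?_⟩
      have hnR : ¬ R (dirac2 (y₀, t - τ)) p₀ := fun hR =>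
        hy₀notC ((hCiff _ (dirac2_mem (Set.mk_mem_prod hy₀X htmτ))).mpr hR)
      have hR : R p₀ (dirac2 (y₀, t - τ)) := by
        rcases hcomp p₀ hp₀ _ (dirac2_mem (Set.mk_mem_prod hy₀X htmτ)) with h | h
        · exact h
        · exact absurd h hnR
      exact (hC₁iff _ (dirac2_mem (Set.mk_mem_prod hy₀X htmτ))).mpr hR
    )
    (by
      refine ⟨x, ⟨le_of_lt hy₀lt, le_refl _⟩, ?_⟩
      exact (hCiff _ (dirac2_mem (Set.mk_mem_prod hxX htmτ))).mpr
        (himp x hxX (t - τ) htmτ t htT (by linarith)).1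
    )
  obtain ⟨y, hyIcc, hyC₁, hyC⟩ := key
  have hyX : y ∈ X := hIccX hyIcc
  have hR1 : R p₀ (dirac2 (y, t - τ)) := (hC₁iff _ (hmemIcc y hyIcc)).mp hyC₁
  have hR2 : R (dirac2 (y, t - τ)) p₀ := (hCiff _ (hmemIcc y hyIcc)).mp hyC
  have hyx : y < x := by
    rcases lt_or_eq_of_le hyIcc.2 with h | h
    · exact h
    · subst h
      exact absurd hR1 (himp y hyX (t - τ) htmτ t htT (by linarith)).2
  -- No Future Bias: shift the indifference δ(y, t-τ) ∼ δ(x, t) by τ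
  have h3 := hNFB y hyX x hxX (t - τ) htmτ t htT (by linarith) τ hτ0
    (by rw [sub_add_cancel]; exact htT) htpτ hR2 hR1
  rw [sub_add_cancel] at h3
  -- h3 : R (dirac2 (x, t + τ)) (dirac2 (y, t))
  have h4 := hWCI (x, t + τ) (Set.mk_mem_prod hxX htpτ) (y, t) (Set.mk_mem_prod hyX htT) (x, t - τ) (Set.mk_mem_prod hxX htmτ) h3
  rw [mix2_comm (dirac2 (x, t + τ)), mix2_comm (dirac2 (y, t))] at h4
  -- h4 : R (mix2 δ(x,t-τ) δ(x,t+τ)) (mix2 δ(x,t-τ) δ(y,t))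
  have h5 := hSI (t - τ) htmτ t htT (by linarith) x hxX y hyX hyx
  rw [mix2_comm (dirac2 (x, t))] at h5
  -- h5 : R (mix2 δ(x,t-τ) δ(y,t)) (mix2 δ(y,t-τ) δ(x,t))
  have h6 := hWCI (y, t - τ) (Set.mk_mem_prod hyX htmτ) (x, t) (Set.mk_mem_prod hxX htT) (x, t) (Set.mk_mem_prod hxX htT) hR2
  rw [mix2_self] at h6
  -- h6 : R (mix2 δ(y,t-τ) δ(x,t)) (dirac2 (x, t))
  have m1 := mix2_dirac_mem (X := X) (T := T) (Set.mk_mem_prod hxX htmτ) (Set.mk_mem_prod hxX htpτ)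
  have m2 := mix2_dirac_mem (X := X) (T := T) (Set.mk_mem_prod hxX htmτ) (Set.mk_mem_prod hyX htT)
  have m3 := mix2_dirac_mem (X := X) (T := T) (Set.mk_mem_prod hyX htmτ) (Set.mk_mem_prod hxX htT)
  exact htrans _ m1 _ m3 _ hp₀ (htrans _ m1 _ m2 _ m3 h4 h5) h6
end

section
/- Let X ⊆ ℝ be a closed interval with minimum w and let T ⊆ ℝ be a closed interval with a minimum. Let R be a relation on ℝ × ℝ that is complete and transitive on X × T (for all a, b ∈ X × T, R a b or R b a; and R is transitive), and satisfies: (Outcome Monotonicity) for x > y in X and s ∈ T, R (x,s) (y,s) and not R (y,s) (x,s); (Impatience) for x ∈ X and t < s in T, R (x,t) (x,s) and not R (x,s) (x,t); (Continuity) for every (x,t) ∈ X × T, the sets {(y,s) ∈ X × T : R (y,s) (x,t)} and {(y,s) ∈ X × T : R (x,t) (y,s)} are closed in ℝ × ℝ. Then for every (x,t) in the interior of X × T there exists s > 0 such that for every τ ∈ (0,s) there exists y ∈ X with y < x, R (y, t-τ) (x,t), and R (x,t) (y, t-τ). -/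
theorem stmt_7 (X T : Set ℝ)
    (hXc : Convex ℝ X) (hXcl : IsClosed X) (w : ℝ) (hw : IsLeast X w)
    (hTc : Convex ℝ T) (hTcl : IsClosed T) (hTmin : ∃ m, IsLeast T m)
    (R : ℝ × ℝ → ℝ × ℝ → Prop)
    (hcomp : ∀ a ∈ X ×ˢ T, ∀ b ∈ X ×ˢ T, R a b ∨ R b a)
    (htrans : ∀ a ∈ X ×ˢ T, ∀ b ∈ X ×ˢ T, ∀ c ∈ X ×ˢ T, R a b → R b c → R a c)
    (hmono : ∀ x ∈ X, ∀ y ∈ X, y < x → ∀ s ∈ T,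
      R (x, s) (y, s) ∧ ¬ R (y, s) (x, s))
    (himp : ∀ x ∈ X, ∀ t ∈ T, ∀ s ∈ T, t < s →
      R (x, t) (x, s) ∧ ¬ R (x, s) (x, t))
    (hcont : ∀ x ∈ X, ∀ t ∈ T,
      IsClosed {z ∈ X ×ˢ T | R z (x, t)} ∧ IsClosed {z ∈ X ×ˢ T | R (x, t) z}) :
    ∀ x t : ℝ, (x, t) ∈ interior (X ×ˢ T) →
      ∃ s > 0, ∀ τ ∈ Set.Ioo (0 : ℝ) s,
        ∃ y ∈ X, y < x ∧ R (y, t - τ) (x, t) ∧ R (x, t) (y, t - τ) := by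
  intro x t hxt
  rw [interior_prod_eq] at hxt
  obtain ⟨hxX, htT⟩ := hxt
  have hx : x ∈ X := interior_subset hxX
  have ht : t ∈ T := interior_subset htT
  -- t has a neighborhood in T
  obtain ⟨ε₁, hε₁, hball₁⟩ := Metric.mem_nhds_iff.mp (mem_interior_iff_mem_nhds.mp htT)
  -- w < x
  have hwx : w < x := by
    rcases lt_or_eq_of_le (hw.2 hx) with h | h
    · exact h
    · exfalso
      obtain ⟨ε, hε, hball⟩ := Metric.mem_nhds_iff.mp (mem_interior_iff_mem_nhds.mp hxX)
      have : x - ε / 2 ∈ X := hball (by simp [Real.dist_eq, abs_of_nonneg, hε.le]; linarith)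
      have := hw.2 this
      linarith
  -- (w,t) strictly worse than (x,t), so a neighborhood of (w,t) avoids the closed set C
  have hC : IsClosed {z ∈ X ×ˢ T | R z (x, t)} := (hcont x hx t ht).1
  have hwnot : (w, t) ∉ {z ∈ X ×ˢ T | R z (x, t)} := by
    intro hmem
    exact (hmono x hx w hw.1 hwx t ht).2 hmem.2
  obtain ⟨ε₂, hε₂, hball₂⟩ := Metric.mem_nhds_iff.mp (hC.isOpen_compl.mem_nhds hwnot)
  refine ⟨min ε₁ ε₂, lt_min hε₁ hε₂, ?_⟩
  intro τ ⟨hτ0, hτs⟩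
  have hτ1 : τ < ε₁ := lt_of_lt_of_le hτs (min_le_left _ _)
  have hτ2 : τ < ε₂ := lt_of_lt_of_le hτs (min_le_right _ _)
  have htτ : t - τ ∈ T := hball₁ (by simp [Real.dist_eq, abs_of_nonpos]; rw [abs_of_pos hτ0]; exact hτ1)
  have htτlt : t - τ < t := by linarith
  -- w is weakly worse than (x,t) at time t - τ
  have hwA : ¬ R (w, t - τ) (x, t) := by
    intro hR
    apply hball₂ (show ((w, t - τ) : ℝ × ℝ) ∈ Metric.ball (w, t) ε₂ from ?_) ⟨⟨hw.1, htτ⟩, hR⟩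
    simp [Prod.dist_eq, Real.dist_eq]
    rw [abs_of_pos hτ0]
    exact hτ2
  have hwA' : R (x, t) (w, t - τ) := by
    rcases hcomp (w, t - τ) ⟨hw.1, htτ⟩ (x, t) ⟨hx, ht⟩ with h | h
    · exact absurd h hwA
    · exact h
  -- the two closed sets covering [w, x]
  set A : Set ℝ := (fun y => ((y, t - τ) : ℝ × ℝ)) ⁻¹' {z ∈ X ×ˢ T | R z (x, t)} with hA
  set B : Set ℝ := (fun y => ((y, t - τ) : ℝ × ℝ)) ⁻¹' {z ∈ X ×ˢ T | R (x, t) z} with hB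
  have hcontf : Continuous (fun y : ℝ => ((y, t - τ) : ℝ × ℝ)) :=
    continuous_id.prodMk continuous_const
  have hAc : IsClosed A := hC.preimage hcontf
  have hBc : IsClosed B := (hcont x hx t ht).2.preimage hcontf
  have hIccX : Set.Icc w x ⊆ X := hXc.ordConnected.out hw.1 hx
  have hcover : Set.Icc w x ⊆ A ∪ B := by
    intro y hy
    have hyX : y ∈ X := hIccX hy
    rcases hcomp (y, t - τ) ⟨hyX, htτ⟩ (x, t) ⟨hx, ht⟩ with h | h
    · exact Or.inl ⟨⟨hyX, htτ⟩, h⟩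
    · exact Or.inr ⟨⟨hyX, htτ⟩, h⟩
  have hAne : (Set.Icc w x ∩ B).Nonempty := ⟨w, ⟨le_refl w, hwx.le⟩, ⟨hw.1, htτ⟩, hwA'⟩
  have hBne : (Set.Icc w x ∩ A).Nonempty :=
    ⟨x, ⟨hwx.le, le_refl x⟩, ⟨hx, htτ⟩, (himp x hx (t - τ) htτ t ht htτlt).1⟩
  obtain ⟨y, hyIcc, hyA, hyB⟩ :=
    isPreconnected_closed_iff.mp isPreconnected_Icc A B hAc hBc hcover hBne hAne
  refine ⟨y, hIccX hyIcc, ?_, hyA.2, hyB.2⟩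
  rcases lt_or_eq_of_le hyIcc.2 with h | h
  · exact h
  · exfalso
    apply (himp x hx (t - τ) htτ t ht htτlt).2
    rw [h] at hyB
    exact hyB.2
end

section
/- Let T, X ⊆ ℝ, let φ : ℝ → ℝ be a function such that y ↦ φ(Real.exp y) is convex on ℝ, let D : ℝ → ℝ be strictly decreasing on T with D(t) > 0 for all t ∈ T, and let v : ℝ → ℝ be strictly increasing on X with v(x) > 0 for all x ∈ X. Then for all t₁ < t₂ in T and x₁ > x₂ in X, φ(D(t₁) * v(x₁)) + φ(D(t₂) * v(x₂)) ≥ φ(D(t₁) * v(x₂)) + φ(D(t₂) * v(x₁)). -/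
/-!
Writing `a = D t` and `b = v x`, put `g = φ ∘ exp`, so that `φ (a * b) = g (log a + log b)`.
The four arguments `log (D tᵢ) + log (v xⱼ)` have equal sums along the two diagonals, and the
off-diagonal pair lies between the diagonal pair; for convex `g`, the sum of `g` over a pair
with a fixed sum grows as the pair spreads out.
-/

open Real

section

variable {𝕜 : Type*} [Field 𝕜] [LinearOrder 𝕜] [IsStrictOrderedRing 𝕜] {S : Set 𝕜} {f : 𝕜 → 𝕜}

theorem ConvexOn.map_add_map_le_of_add_eq (hf : ConvexOn 𝕜 S f) {p q x y : 𝕜}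
    (hp : p ∈ S) (hq : q ∈ S) (hpx : p ≤ x) (hxq : x ≤ q) (hsum : x + y = p + q) :
    f x + f y ≤ f p + f q := by
  obtain hpq | hpq := (hpx.trans hxq).eq_or_lt
  · obtain rfl : x = p := le_antisymm (hpq ▸ hxq) hpx
    obtain rfl : y = q := by linarith
    rfl
  have hqp : 0 < q - p := sub_pos.2 hpq
  have secant : ∀ z, p ≤ z → z ≤ q → (q - p) * f z ≤ (q - z) * f p + (z - p) * f q := by
    intro z hpz hzq
    have h := hf.2 hp hq (div_nonneg (sub_nonneg.2 hzq) hqp.le)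
      (div_nonneg (sub_nonneg.2 hpz) hqp.le) (by field)
    have hz : (q - z) / (q - p) * p + (z - p) / (q - p) * q = z := by field
    simp only [smul_eq_mul, hz] at h
    field_simp at h
    linarith
  have hx := secant x hpx hxq
  have hy := secant y (by linarith) (by linarith)
  have hscaled : (q - p) * (f x + f y) ≤ (q - p) * (f p + f q) := by
    linear_combination hx + hy + (f q - f p) * hsum
  exact le_of_mul_le_mul_left hscaled hqp

end

theorem map_mul_add_map_mul_le_of_convexOn_comp_exp {φ : ℝ → ℝ}
    (hφ : ConvexOn ℝ Set.univ (fun y => φ (exp y))) {a₁ a₂ b₁ b₂ : ℝ}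
    (ha₂ : 0 < a₂) (ha : a₂ ≤ a₁) (hb₂ : 0 < b₂) (hb : b₂ ≤ b₁) :
    φ (a₁ * b₂) + φ (a₂ * b₁) ≤ φ (a₁ * b₁) + φ (a₂ * b₂) := by
  have ha₁ := ha₂.trans_le ha
  have hb₁ := hb₂.trans_le hb
  have key := hφ.map_add_map_le_of_add_eq (Set.mem_univ (log a₂ + log b₂))
    (Set.mem_univ (log a₁ + log b₁)) (x := log a₁ + log b₂) (y := log a₂ + log b₁)
    (by gcongr) (by gcongr) (by ring)
  rw [add_comm (φ (a₁ * b₁))]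
  simpa only [exp_add, exp_log ha₁, exp_log ha₂, exp_log hb₁, exp_log hb₂] using key

theorem stmt_12 (T X : Set ℝ) (φ D v : ℝ → ℝ)
    (hφ : ConvexOn ℝ Set.univ (fun y => φ (Real.exp y)))
    (hD : StrictAntiOn D T) (hDpos : ∀ t ∈ T, 0 < D t)
    (hv : StrictMonoOn v X) (hvpos : ∀ x ∈ X, 0 < v x) :
    ∀ t₁ ∈ T, ∀ t₂ ∈ T, t₁ < t₂ → ∀ x₁ ∈ X, ∀ x₂ ∈ X, x₂ < x₁ →
      φ (D t₁ * v x₁) + φ (D t₂ * v x₂) ≥ φ (D t₁ * v x₂) + φ (D t₂ * v x₁) := by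
  intro t₁ ht₁ t₂ ht₂ ht x₁ hx₁ x₂ hx₂ hx
  exact map_mul_add_map_mul_le_of_convexOn_comp_exp hφ (hDpos t₂ ht₂) (hD ht₁ ht₂ ht).le
    (hvpos x₂ hx₂) (hv hx₂ hx₁ hx).le
end

section
/- The function D : ℝ → ℝ defined by D(t) = Real.exp(-t - t^3/3) is strictly convex on the interval [0, ∞). -/
/-!
The second derivative of `D t = exp (-t - t³/3)` is `((1 + t²)² - 2t) D t`, and
`(1 + t²)² - 2t = (t - 1)² + t² + t⁴` is positive, so `D` is strictly convex on all of `ℝ`.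
-/

open Real Set

theorem strictConvexOn_univ_of_hasDerivAt_of_hasDerivAt {f f' f'' : ℝ → ℝ}
    (hf : ∀ x, HasDerivAt f (f' x) x) (hf' : ∀ x, HasDerivAt f' (f'' x) x)
    (hf''_pos : ∀ x, 0 < f'' x) : StrictConvexOn ℝ univ f := by
  have hderiv : deriv f = f' := funext fun x => (hf x).deriv
  refine strictConvexOn_univ_of_deriv2_pos
    (continuous_iff_continuousAt.2 fun x => (hf x).continuousAt) fun x => ?_
  rw [Function.iterate_succ_apply, Function.iterate_one, hderiv, (hf' x).deriv]
  exact hf''_pos x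

lemma hasDerivAt_exp_neg_sub_cube_div_three (x : ℝ) :
    HasDerivAt (fun t => exp (-t - t ^ 3 / 3)) (-(1 + x ^ 2) * exp (-x - x ^ 3 / 3)) x := by
  have hinner : HasDerivAt (fun t : ℝ => -t - t ^ 3 / 3) (-(1 + x ^ 2)) x :=
    ((hasDerivAt_id x).neg.sub ((hasDerivAt_pow 3 x).div_const 3)).congr_deriv (by norm_num; ring)
  exact hinner.exp.congr_deriv (mul_comm _ _)

lemma hasDerivAt_neg_one_add_sq_mul_exp_neg_sub_cube_div_three (x : ℝ) :
    HasDerivAt (fun t => -(1 + t ^ 2) * exp (-t - t ^ 3 / 3))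
      (((1 + x ^ 2) ^ 2 - 2 * x) * exp (-x - x ^ 3 / 3)) x := by
  have hpoly : HasDerivAt (fun t : ℝ => -(1 + t ^ 2)) (-(2 * x)) x :=
    ((hasDerivAt_pow 2 x).const_add 1).neg.congr_deriv (by norm_num)
  exact (hpoly.mul (hasDerivAt_exp_neg_sub_cube_div_three x)).congr_deriv (by ring)

lemma one_add_sq_sq_sub_two_mul_pos (x : ℝ) : 0 < (1 + x ^ 2) ^ 2 - 2 * x := by
  nlinarith [sq_nonneg (x - 1), sq_nonneg x, sq_nonneg (x ^ 2)]

theorem stmt_14 :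
    StrictConvexOn ℝ (Set.Ici (0 : ℝ)) (fun t : ℝ => Real.exp (-t - t ^ 3 / 3)) :=
  (strictConvexOn_univ_of_hasDerivAt_of_hasDerivAt hasDerivAt_exp_neg_sub_cube_div_three
    hasDerivAt_neg_one_add_sq_mul_exp_neg_sub_cube_div_three
    fun x => mul_pos (one_add_sq_sq_sub_two_mul_pos x) (exp_pos _)).subset
    (subset_univ _) (convex_Ici 0)
end

section
/- Let X, T ⊆ ℝ be intervals, let D : ℝ → ℝ be strictly decreasing and continuous on T with D > 0 on T, let v : ℝ → ℝ be strictly increasing and continuous on X with v > 0 on X, and let φ : ℝ → ℝ be strictly increasing and continuous on the set {D(t) * v(x) : t ∈ T, x ∈ X}, with y ↦ φ(Real.exp y) convex on ℝ, and with t ↦ φ(D(t) * v(x)) concave on T for each x ∈ X. Define u(x,t) = φ(D(t) * v(x)). Then: (a) Outcome Monotonicity: for x > y in X and s ∈ T, u(x,s) > u(y,s); (b) Impatience: for x ∈ X and t < s in T, u(x,t) > u(x,s); (c) Stochastic Impatience: for t₁ < t₂ in T and x₁ > x₂ in X, u(x₁,t₁) + u(x₂,t₂) ≥ u(x₁,t₂)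 + u(x₂,t₁); (d) Risk Aversion over Time Lotteries: for every x ∈ X, every n : ℕ, every w : Fin n → ℝ with w i ≥ 0 and ∑ i, w i = 1, and every t : Fin n → ℝ with t i ∈ T, one has ∑ i, w i * u(x, t i) ≤ u(x, ∑ i, w i * t i); (e) Double Cancellation: for x₁, x₂, x₃ ∈ X and t₁, t₂, t₃ ∈ T, if u(x₁,t₁) ≥ u(x₂,t₂) and u(x₂,t₃) ≥ u(x₃,t₁), then u(x₁,t₃) ≥ u(x₃,t₂). -/
open Finset

/-- For a convex function on ℝ, if m ≤ c,d ≤ M and c + d = M + m then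
    g c + g d ≤ g M + g m. -/
lemma convex_pair_ineq (g : ℝ → ℝ) (hg : ConvexOn ℝ Set.univ g)
    (m c d M : ℝ) (hmc : m ≤ c) (hcM : c ≤ M) (hmd : m ≤ d) (hdM : d ≤ M)
    (hsum : c + d = M + m) : g c + g d ≤ g M + g m := by
  rcases eq_or_lt_of_le (hmc.trans hcM) with h | h
  · have hc : c = m := le_antisymm (by linarith) hmc
    have hd : d = m := le_antisymm (by linarith) hmd
    rw [hc, hd, ← h]
  · set lam := (c - m) / (M - m) with hlam
    have hMm : 0 < M - m := by linarith
    have h0 : 0 ≤ lam := div_nonneg (by linarith) hMm.le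
    have h1 : lam ≤ 1 := by
      rw [hlam, div_le_one hMm]; linarith
    have hlm : lam * (M - m) = c - m := div_mul_cancel₀ _ hMm.ne'
    have hc' : c = lam * M + (1 - lam) * m := by nlinarith [hlm]
    have hd' : d = (1 - lam) * M + lam * m := by nlinarith [hlm]
    have h1' : (0:ℝ) ≤ 1 - lam := sub_nonneg.mpr h1
    have hs1 : lam + (1 - lam) = 1 := by ring
    have hs2 : (1 - lam) + lam = 1 := by ring
    have e1 : g c ≤ lam * g M + (1 - lam) * g m := by
      have := hg.2 (Set.mem_univ M) (Set.mem_univ m) h0 h1' hs1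
      simpa [← hc', smul_eq_mul] using this
    have e2 : g d ≤ (1 - lam) * g M + lam * g m := by
      have := hg.2 (Set.mem_univ M) (Set.mem_univ m) h1' h0 hs2
      simpa [← hd', smul_eq_mul] using this
    nlinarith

theorem stmt_16 (X T : Set ℝ) (hX : Convex ℝ X) (hT : Convex ℝ T)
    (D v φ : ℝ → ℝ)
    (hD : StrictAntiOn D T) (hDcont : ContinuousOn D T) (hDpos : ∀ t ∈ T, 0 < D t)
    (hv : StrictMonoOn v X) (hvcont : ContinuousOn v X) (hvpos : ∀ x ∈ X, 0 < v x)
    (hφ : StrictMonoOn φ {y | ∃ t ∈ T, ∃ x ∈ X, y = D t * v x})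
    (hφcont : ContinuousOn φ {y | ∃ t ∈ T, ∃ x ∈ X, y = D t * v x})
    (hφexp : ConvexOn ℝ Set.univ (fun y => φ (Real.exp y)))
    (hconc : ∀ x ∈ X, ConcaveOn ℝ T (fun t => φ (D t * v x)))
    (u : ℝ → ℝ → ℝ) (hu : ∀ x t, u x t = φ (D t * v x)) :
    -- (a) Outcome Monotonicity
    (∀ x ∈ X, ∀ y ∈ X, y < x → ∀ s ∈ T, u x s > u y s) ∧
    -- (b) Impatience
    (∀ x ∈ X, ∀ t ∈ T, ∀ s ∈ T, t < s → u x t > u x s) ∧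
    -- (c) Stochastic Impatience
    (∀ t₁ ∈ T, ∀ t₂ ∈ T, t₁ < t₂ → ∀ x₁ ∈ X, ∀ x₂ ∈ X, x₂ < x₁ →
      u x₁ t₁ + u x₂ t₂ ≥ u x₁ t₂ + u x₂ t₁) ∧
    -- (d) Risk Aversion over Time Lotteries
    (∀ x ∈ X, ∀ n : ℕ, ∀ w : Fin n → ℝ, (∀ i, 0 ≤ w i) → (∑ i, w i) = 1 →
      ∀ t : Fin n → ℝ, (∀ i, t i ∈ T) →
        ∑ i, w i * u x (t i) ≤ u x (∑ i, w i * t i)) ∧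
    -- (e) Double Cancellation
    (∀ x₁ ∈ X, ∀ x₂ ∈ X, ∀ x₃ ∈ X, ∀ t₁ ∈ T, ∀ t₂ ∈ T, ∀ t₃ ∈ T,
      u x₁ t₁ ≥ u x₂ t₂ → u x₂ t₃ ≥ u x₃ t₁ → u x₁ t₃ ≥ u x₃ t₂) := by
  set S : Set ℝ := {y | ∃ t ∈ T, ∃ x ∈ X, y = D t * v x} with hS
  have hmem : ∀ t ∈ T, ∀ x ∈ X, D t * v x ∈ S := fun t ht x hx => ⟨t, ht, x, hx, rfl⟩
  refine ⟨?_, ?_, ?_, ?_, ?_⟩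
  · -- (a)
    intro x hx y hy hxy s hs
    rw [hu, hu]
    exact hφ (hmem s hs y hy) (hmem s hs x hx)
      (mul_lt_mul_of_pos_left (hv hy hx hxy) (hDpos s hs))
  · -- (b)
    intro x hx t ht s hs hts
    rw [hu, hu]
    exact hφ (hmem s hs x hx) (hmem t ht x hx)
      (mul_lt_mul_of_pos_right (hD ht hs hts) (hvpos x hx))
  · -- (c)
    intro t₁ ht₁ t₂ ht₂ ht x₁ hx₁ x₂ hx₂ hx
    rw [hu, hu, hu, hu]
    have hD1 := hDpos t₁ ht₁
    have hD2 := hDpos t₂ ht₂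
    have hv1 := hvpos x₁ hx₁
    have hv2 := hvpos x₂ hx₂
    set a := Real.log (D t₁)
    set b := Real.log (D t₂)
    set p := Real.log (v x₁)
    set q := Real.log (v x₂)
    have hab : b < a := Real.log_lt_log hD2 (hD ht₁ ht₂ ht)
    have hpq : q < p := Real.log_lt_log hv2 (hv hx₂ hx₁ hx)
    have key := convex_pair_ineq _ hφexp (b + q) (a + q) (b + p) (a + p)
      (by linarith) (by linarith) (by linarith) (by linarith) (by ring)
    have e1 : Real.exp (a + p) = D t₁ * v x₁ := by
      rw [Real.exp_add, Real.exp_log hD1, Real.exp_log hv1]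
    have e2 : Real.exp (b + q) = D t₂ * v x₂ := by
      rw [Real.exp_add, Real.exp_log hD2, Real.exp_log hv2]
    have e3 : Real.exp (a + q) = D t₁ * v x₂ := by
      rw [Real.exp_add, Real.exp_log hD1, Real.exp_log hv2]
    have e4 : Real.exp (b + p) = D t₂ * v x₁ := by
      rw [Real.exp_add, Real.exp_log hD2, Real.exp_log hv1]
    simp only [e1, e2, e3, e4] at key
    linarith
  · -- (d)
    intro x hx n w hw hw1 t ht
    have hcv := hconc x hx
    have := hcv.le_map_sum (t := Finset.univ) (w := w) (p := t)
      (fun i _ => hw i) hw1 (fun i _ => ht i)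
    simp only [smul_eq_mul] at this
    calc ∑ i, w i * u x (t i) = ∑ i, w i * φ (D (t i) * v x) := by
          simp only [hu]
      _ ≤ φ (D (∑ i, w i * t i) * v x) := this
      _ = u x (∑ i, w i * t i) := (hu _ _).symm
  · -- (e)
    intro x₁ hx₁ x₂ hx₂ x₃ hx₃ t₁ ht₁ t₂ ht₂ t₃ ht₃ h1 h2
    rw [hu, hu] at h1 h2 ⊢
    have r1 : D t₂ * v x₂ ≤ D t₁ * v x₁ :=
      ((hφ.le_iff_le (hmem t₂ ht₂ x₂ hx₂) (hmem t₁ ht₁ x₁ hx₁))).mp h1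
    have r2 : D t₁ * v x₃ ≤ D t₃ * v x₂ :=
      ((hφ.le_iff_le (hmem t₁ ht₁ x₃ hx₃) (hmem t₃ ht₃ x₂ hx₂))).mp h2
    refine (hφ.le_iff_le (hmem t₂ ht₂ x₃ hx₃) (hmem t₃ ht₃ x₁ hx₁)).mpr ?_
    have hD1 := hDpos t₁ ht₁
    have hv2 := hvpos x₂ hx₂
    have key := mul_le_mul r2 r1 (mul_pos (hDpos t₂ ht₂) hv2).le
      (mul_pos (hDpos t₃ ht₃) hv2).le
    have key2 : (D t₁ * v x₂) * (D t₂ * v x₃) ≤ (D t₁ * v x₂) * (D t₃ * v x₁) := by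
      nlinarith [key]
    exact le_of_mul_le_mul_left key2 (mul_pos hD1 hv2)
end
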